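/- Riemann invariant form of the viscous system: Let ε ∈ ℝ, let V ⊆ ℝ² be open (coordinates (t,x)), and let σ, β : V → ℝ be C² functions with σ(t,x) > |β(t,x)| for all (t,x) ∈ V, satisfying pointwise on V the regularized system ∂_t σ + ∂_x [ artanh(β/σ) ] = ε ∂²_x σ and ∂_t β + ∂_x [ (1/2)·log(σ² − β²) ] = ε ∂²_x β. Then the Riemann invariants w₁ = σ + β and w₂ = σ − β satisfy pointwise on V the scalar equations ∂_t w₁ + ∂_x [ log(w₁) ] = ε ∂²_x w₁ and ∂_t w₂ − ∂_x [ log(w₂) ] = ε ∂²_x w₂. -/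

import Mathlib

/-!
On `σ > |β|` both fluxes split into logarithms of the Riemann invariants:
`artanh (β/σ) = (log w₁ - log w₂)/2` and `½ log (σ² - β²) = (log w₁ + log w₂)/2`.
Adding and subtracting the two viscous equations, and using linearity of `∂_t` and `∂²_x`,
therefore gives the two scalar equations.
-/

noncomputable section

def artanh (x : ℝ) : ℝ := (1/2) * Real.log ((1 + x) / (1 - x))

open Filter Topology

theorem artanh_div_eq_half_log_sub_log {s b : ℝ} (h : |b| < s) :
    artanh (b / s) = (1/2) * (Real.log (s + b) - Real.log (s - b)) := by
  obtain ⟨hlt, hgt⟩ := abs_lt.mp h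
  have hs : s ≠ 0 := by linarith
  have hquot : (1 + b / s) / (1 - b / s) = (s + b) / (s - b) := by
    field_simp
  rw [artanh, hquot, Real.log_div (by linarith) (by linarith)]

theorem half_log_sq_sub_sq_eq_half_log_add_log {s b : ℝ} (h : |b| < s) :
    (1/2) * Real.log (s ^ 2 - b ^ 2) = (1/2) * (Real.log (s + b) + Real.log (s - b)) := by
  obtain ⟨hlt, hgt⟩ := abs_lt.mp h
  rw [show s ^ 2 - b ^ 2 = (s + b) * (s - b) by ring, Real.log_mul (by linarith) (by linarith)]

section FluxDerivatives

variable {s b : ℝ → ℝ} {s' b' x : ℝ}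

theorem HasDerivAt.log_add_of_abs_lt (hs : HasDerivAt s s' x) (hb : HasDerivAt b b' x)
    (h : |b x| < s x) :
    HasDerivAt (fun y => Real.log (s y + b y)) ((s' + b') / (s x + b x)) x :=
  (hs.add hb).log (show s x + b x ≠ 0 by linarith [(abs_lt.mp h).1])

theorem HasDerivAt.log_sub_of_abs_lt (hs : HasDerivAt s s' x) (hb : HasDerivAt b b' x)
    (h : |b x| < s x) :
    HasDerivAt (fun y => Real.log (s y - b y)) ((s' - b') / (s x - b x)) x :=
  (hs.sub hb).log (show s x - b x ≠ 0 by linarith [(abs_lt.mp h).2])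

theorem HasDerivAt.artanh_div (hs : HasDerivAt s s' x) (hb : HasDerivAt b b' x)
    (h : ∀ᶠ y in 𝓝 x, |b y| < s y) :
    HasDerivAt (fun y => artanh (b y / s y))
      ((1/2) * ((s' + b') / (s x + b x) - (s' - b') / (s x - b x))) x :=
  (((hs.log_add_of_abs_lt hb h.self_of_nhds).sub
    (hs.log_sub_of_abs_lt hb h.self_of_nhds)).const_mul _).congr_of_eventuallyEq
    (h.mono fun _ hy => artanh_div_eq_half_log_sub_log hy)

theorem HasDerivAt.half_log_sq_sub_sq (hs : HasDerivAt s s' x) (hb : HasDerivAt b b' x)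
    (h : ∀ᶠ y in 𝓝 x, |b y| < s y) :
    HasDerivAt (fun y => (1/2) * Real.log (s y ^ 2 - b y ^ 2))
      ((1/2) * ((s' + b') / (s x + b x) + (s' - b') / (s x - b x))) x :=
  (((hs.log_add_of_abs_lt hb h.self_of_nhds).add
    (hs.log_sub_of_abs_lt hb h.self_of_nhds)).const_mul _).congr_of_eventuallyEq
    (h.mono fun _ hy => half_log_sq_sub_sq_eq_half_log_add_log hy)

end FluxDerivatives

theorem deriv_deriv_eq_iteratedDeriv_two {𝕜 F : Type*} [NontriviallyNormedField 𝕜]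
    [NormedAddCommGroup F] [NormedSpace 𝕜 F] (f : 𝕜 → F) (x : 𝕜) :
    deriv (fun y => deriv f y) x = iteratedDeriv 2 f x := by
  simp [iteratedDeriv_succ]

theorem ContDiffOn.contDiffAt_slices {n : WithTop ℕ∞} {f : ℝ → ℝ → ℝ} {V : Set (ℝ × ℝ)}
    (hV : IsOpen V) (hf : ContDiffOn ℝ n (fun p : ℝ × ℝ => f p.1 p.2) V) {t x : ℝ}
    (hx : (t, x) ∈ V) :
    ContDiffAt ℝ n (fun t' => f t' x) t ∧ ContDiffAt ℝ n (fun x' => f t x') x :=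
  have hf' := hf.contDiffAt (hV.mem_nhds hx)
  ⟨hf'.comp t (contDiffAt_id.prodMk contDiffAt_const),
    hf'.comp x (contDiffAt_const.prodMk contDiffAt_id)⟩

/-- **Riemann invariant form of the viscous system** (eq. (6.2)): if `(σ,β)` is a C²
solution of the regularized system on an open set `V` with `σ > |β|`, then the Riemann
invariants `w₁ = σ + β` and `w₂ = σ − β` satisfy the scalar viscous equations
`∂_t w₁ + ∂_x log w₁ = ε ∂²_x w₁` and `∂_t w₂ − ∂_x log w₂ = ε ∂²_x w₂` on `V`. -/
theorem riemann_invariant_viscous_form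
    (ε : ℝ) (V : Set (ℝ × ℝ)) (hV : IsOpen V)
    (σ β : ℝ → ℝ → ℝ)
    (hσ : ContDiffOn ℝ 2 (fun p : ℝ × ℝ => σ p.1 p.2) V)
    (hβ : ContDiffOn ℝ 2 (fun p : ℝ × ℝ => β p.1 p.2) V)
    (hU : ∀ t x : ℝ, (t, x) ∈ V → |β t x| < σ t x)
    (heq1 : ∀ t x : ℝ, (t, x) ∈ V →
      deriv (fun t' => σ t' x) t + deriv (fun x' => artanh (β t x' / σ t x')) x
        = ε * deriv (fun x' => deriv (fun x'' => σ t x'') x') x)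
    (heq2 : ∀ t x : ℝ, (t, x) ∈ V →
      deriv (fun t' => β t' x) t
          + deriv (fun x' => (1/2) * Real.log ((σ t x')^2 - (β t x')^2)) x
        = ε * deriv (fun x' => deriv (fun x'' => β t x'') x') x) :
    ∀ t x : ℝ, (t, x) ∈ V →
      (deriv (fun t' => σ t' x + β t' x) t
          + deriv (fun x' => Real.log (σ t x' + β t x')) x
        = ε * deriv (fun x' => deriv (fun x'' => σ t x'' + β t x'') x') x) ∧
      (deriv (fun t' => σ t' x - β t' x) t
          - deriv (fun x' => Real.log (σ t x' - β t x')) x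
        = ε * deriv (fun x' => deriv (fun x'' => σ t x'' - β t x'') x') x) := by
  intro t x hx
  obtain ⟨hσt, hσx⟩ := hσ.contDiffAt_slices hV hx
  obtain ⟨hβt, hβx⟩ := hβ.contDiffAt_slices hV hx
  have hUx : ∀ᶠ y in 𝓝 x, |β t y| < σ t y :=
    ((hV.preimage (Continuous.prodMk_right t)).eventually_mem hx).mono fun y hy => hU t y hy
  have hσ' := (hσx.differentiableAt two_ne_zero).hasDerivAt
  have hβ' := (hβx.differentiableAt two_ne_zero).hasDerivAt
  have e1 := heq1 t x hx
  have e2 := heq2 t x hx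
  rw [(hσ'.artanh_div hβ' hUx).deriv] at e1
  rw [(hσ'.half_log_sq_sub_sq hβ' hUx).deriv] at e2
  simp only [deriv_deriv_eq_iteratedDeriv_two] at e1 e2 ⊢
  rw [deriv_fun_add (hσt.differentiableAt two_ne_zero) (hβt.differentiableAt two_ne_zero),
    deriv_fun_sub (hσt.differentiableAt two_ne_zero) (hβt.differentiableAt two_ne_zero),
    (hσ'.log_add_of_abs_lt hβ' hUx.self_of_nhds).deriv,
    (hσ'.log_sub_of_abs_lt hβ' hUx.self_of_nhds).deriv,
    iteratedDeriv_fun_add hσx hβx, iteratedDeriv_fun_sub hσx hβx]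
  constructor <;> linarith
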